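/- arXiv:2212.00364 — 7 statements merged into one kernel-verified Lean document; each statement's English description precedes it below -/
import Mathlib

section
/- Let a ≥ 7 be an integer and let ρ be the largest real root of f(x) = x^3 - a x^2 - (a+3)x - 1. Then a + 1 < ρ < a + 1 + 2/a. Moreover f has a root ρ' with -1 - 1/a < ρ' < -1 - 1/(2a) and a root ρ'' with -1/(a+2) < ρ'' < -1/(a+3). -/
lemma root_of_sign_change (g : ℝ → ℝ) (hg : Continuous g) (l u : ℝ) (hlu : l ≤ u)
    (h1 : g l < 0) (h2 : 0 < g u) : ∃ x ∈ Set.Ioo l u, g x = 0 := by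
  have := intermediate_value_Ioo hlu hg.continuousOn
  have h0 : (0:ℝ) ∈ Set.Ioo (g l) (g u) := ⟨h1, h2⟩
  obtain ⟨x, hx, hx0⟩ := this h0
  exact ⟨x, hx, hx0⟩

lemma root_of_sign_change' (g : ℝ → ℝ) (hg : Continuous g) (l u : ℝ) (hlu : l ≤ u)
    (h1 : 0 < g l) (h2 : g u < 0) : ∃ x ∈ Set.Ioo l u, g x = 0 := by
  have := intermediate_value_Ioo' hlu hg.continuousOn
  have h0 : (0:ℝ) ∈ Set.Ioo (g u) (g l) := ⟨h2, h1⟩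
  obtain ⟨x, hx, hx0⟩ := this h0
  exact ⟨x, hx, hx0⟩

set_option maxHeartbeats 1000000 in
theorem roots_estimates (a : ℤ) (ha : 7 ≤ a) (ρ : ℝ)
    (hρ : ρ^3 - a*ρ^2 - (a+3)*ρ - 1 = 0)
    (hmax : ∀ x : ℝ, x^3 - a*x^2 - (a+3)*x - 1 = 0 → x ≤ ρ) :
    ((a : ℝ) + 1 < ρ ∧ ρ < a + 1 + 2/a) ∧
    (∃ ρ' : ℝ, ρ'^3 - a*ρ'^2 - (a+3)*ρ' - 1 = 0 ∧
      -1 - 1/(a : ℝ) < ρ' ∧ ρ' < -1 - 1/(2*a)) ∧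
    (∃ ρ'' : ℝ, ρ''^3 - a*ρ''^2 - (a+3)*ρ'' - 1 = 0 ∧
      -1/((a : ℝ)+2) < ρ'' ∧ ρ'' < -1/((a : ℝ)+3)) := by
  set A : ℝ := (a : ℝ) with hA
  have hA7 : (7:ℝ) ≤ A := by rw [hA]; exact_mod_cast ha
  have hApos : (0:ℝ) < A := by linarith
  have hg : Continuous (fun x : ℝ => x^3 - A*x^2 - (A+3)*x - 1) := by continuity
  -- big root interval
  have hglow : ((A+1)^3 - A*(A+1)^2 - (A+3)*(A+1) - 1 : ℝ) < 0 := by nlinarith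
  have hub : A + 1 ≤ A + 1 + 2/A := by
    have : (0:ℝ) < 2/A := by positivity
    linarith
  have hghigh : (0:ℝ) < (A+1+2/A)^3 - A*(A+1+2/A)^2 - (A+3)*(A+1+2/A) - 1 := by
    have key : (A+1+2/A)^3 - A*(A+1+2/A)^2 - (A+3)*(A+1+2/A) - 1
        = (3*A^3 + 8*A^2 + 12*A + 8)/A^3 := by field_simp; ring
    rw [key]
    apply div_pos (by nlinarith) (by positivity)
  obtain ⟨r, hr, hr0⟩ := root_of_sign_change _ hg _ _ hub hglow hghigh
  have hρlb : A + 1 < ρ := lt_of_lt_of_le hr.1 (hmax r hr0)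
  have hρub : ρ < A + 1 + 2/A := by
    by_contra h
    push_neg at h
    have hd : (A^2+A+2)/A ≤ ρ := by
      have he : A + 1 + 2/A = (A^2 + A + 2)/A := by field_simp
      linarith [he ▸ h]
    have hAx : A^2 + A + 2 ≤ A * ρ := by
      have := (div_le_iff₀ hApos).mp hd
      nlinarith [this]
    nlinarith [sq_nonneg (ρ - A - 1), sq_nonneg ρ, mul_nonneg (le_of_lt hApos) (sq_nonneg (ρ - A - 1))]
  refine ⟨⟨hρlb, hρub⟩, ?_, ?_⟩
  · -- root near -1
    have hle : (-1 - 1/A : ℝ) ≤ -1 - 1/(2*A) := by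
      have : 1/(2*A) ≤ 1/A := by
        apply one_div_le_one_div_of_le hApos; linarith
      linarith
    have h1 : ((-1 - 1/A)^3 - A*(-1 - 1/A)^2 - (A+3)*(-1 - 1/A) - 1 : ℝ) < 0 := by
      have hx : (-1 - 1/A : ℝ) = -(A+1)/A := by field_simp; ring
      rw [hx]
      have key : (-(A+1)/A)^3 - A*(-(A+1)/A)^2 - (A+3)*(-(A+1)/A) - 1
          = (-(A^2+3*A+1))/A^3 := by field_simp; ring
      rw [key]
      apply div_neg_of_neg_of_pos (by nlinarith) (by positivity)
    have h2 : (0:ℝ) < (-1 - 1/(2*A))^3 - A*(-1 - 1/(2*A))^2 - (A+3)*(-1 - 1/(2*A)) - 1 := by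
      have hx : (-1 - 1/(2*A) : ℝ) = -(2*A+1)/(2*A) := by field_simp; ring
      rw [hx]
      have key : (-(2*A+1)/(2*A))^3 - A*(-(2*A+1)/(2*A))^2 - (A+3)*(-(2*A+1)/(2*A)) - 1
          = (4*A^3 - 2*A^2 - 6*A - 1)/(8*A^3) := by field_simp; ring
      rw [key]
      apply div_pos (by nlinarith) (by positivity)
    obtain ⟨x, hx, hx0⟩ := root_of_sign_change _ hg _ _ hle h1 h2
    exact ⟨x, hx0, hx.1, hx.2⟩
  · -- root near 0
    have hle : (-1/(A+2) : ℝ) ≤ -1/(A+3) := by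
      rw [neg_div, neg_div, neg_le_neg_iff]
      apply one_div_le_one_div_of_le (by linarith); linarith
    have h1 : (0:ℝ) < (-1/(A+2))^3 - A*(-1/(A+2))^2 - (A+3)*(-1/(A+2)) - 1 := by
      have key : (-1/(A+2))^3 - A*(-1/(A+2))^2 - (A+3)*(-1/(A+2)) - 1
          = (2*A+3)/(A+2)^3 := by field_simp; ring
      rw [key]; apply div_pos (by linarith) (by positivity)
    have h2 : ((-1/(A+3))^3 - A*(-1/(A+3))^2 - (A+3)*(-1/(A+3)) - 1 : ℝ) < 0 := by
      have key : (-1/(A+3))^3 - A*(-1/(A+3))^2 - (A+3)*(-1/(A+3)) - 1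
          = (-(A^2+3*A+1))/(A+3)^3 := by field_simp; ring
      rw [key]; apply div_neg_of_neg_of_pos (by nlinarith) (by positivity)
    obtain ⟨x, hx, hx0⟩ := root_of_sign_change' _ hg _ _ hle h1 h2
    exact ⟨x, hx0, hx.1, hx.2⟩
end

section
/- Let ρ be a root of x^3 - a x^2 - (a+3)x - 1 (a ∈ ℤ). Then ρ' := a + 2 + aρ - ρ^2 satisfies ρ' = -1 - 1/ρ and is also a root of the same polynomial, and ρ'' := -2 - (a+1)ρ + ρ^2 satisfies ρ'' = -1/(1+ρ) and is also a root. -/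
theorem conjugate_roots {F : Type*} [Field F] [CharZero F] (a : ℤ) (ρ : F)
    (hρ : ρ^3 - a*ρ^2 - (a+3)*ρ - 1 = 0) (h0 : ρ ≠ 0) (h1 : ρ ≠ -1) :
    ((a : F) + 2 + a*ρ - ρ^2 = -1 - 1/ρ ∧
      ((a : F) + 2 + a*ρ - ρ^2)^3 - a*((a : F) + 2 + a*ρ - ρ^2)^2
        - (a+3)*((a : F) + 2 + a*ρ - ρ^2) - 1 = 0) ∧
    (-2 - ((a : F)+1)*ρ + ρ^2 = -1/(1+ρ) ∧
      (-2 - ((a : F)+1)*ρ + ρ^2)^3 - a*(-2 - ((a : F)+1)*ρ + ρ^2)^2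
        - (a+3)*(-2 - ((a : F)+1)*ρ + ρ^2) - 1 = 0) := by
  have h1' : (1 : F) + ρ ≠ 0 := by
    intro h; exact h1 (by linear_combination h)
  refine ⟨⟨?_, ?_⟩, ?_, ?_⟩
  · field_simp
    ring_nf
    linear_combination -hρ
  · linear_combination (-1 - 3*(a:F) - (a:F)^2 + 3*ρ + a*ρ - (a:F)^2*ρ + 2*a*ρ^2 - ρ^3) * hρ
  · field_simp
    ring_nf
    linear_combination hρ
  · linear_combination (3 + 2*(a:F) + 3*a*ρ + (a:F)^2*ρ - 3*ρ^2 - 2*a*ρ^2 + ρ^3) * hρ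
end

section
/- Let K = ℚ(ρ) where ρ is a root of x^3 - a x^2 - (a+3)x - 1, and suppose a ≡ 3 or 21 (mod 27). Then θ = (1 + ρ + ρ^2)/3 is an algebraic integer; explicitly, θ is a root of x^3 - ((a^2+3a+9)/3) x^2 + (2(a^2+3a+9)/9) x - (a^2+3a+9)/27, which has integer coefficients. -/
theorem g3_is_algebraic_integer (a : ℤ)
    (ha : a ≡ 3 [ZMOD 27] ∨ a ≡ 21 [ZMOD 27]) (ρ : ℂ)
    (hρ : ρ^3 - a*ρ^2 - (a+3)*ρ - 1 = 0) :
    (3 : ℤ) ∣ a^2 + 3*a + 9 ∧ (9 : ℤ) ∣ 2*(a^2 + 3*a + 9) ∧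
    (27 : ℤ) ∣ a^2 + 3*a + 9 ∧
    ((1 + ρ + ρ^2)/3)^3 - (((a : ℂ)^2 + 3*a + 9)/3) * ((1 + ρ + ρ^2)/3)^2
      + (2*((a : ℂ)^2 + 3*a + 9)/9) * ((1 + ρ + ρ^2)/3)
      - ((a : ℂ)^2 + 3*a + 9)/27 = 0 ∧
    IsIntegral ℤ ((1 + ρ + ρ^2)/3) := by
  have h27 : (27 : ℤ) ∣ a^2 + 3*a + 9 := by
    rcases ha with h | h
    · obtain ⟨k, hk⟩ := h.dvd
      have hak : a = 3 - 27 * k := by omega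
      exact ⟨k^2 * 27 - 9*k + 1, by rw [hak]; ring⟩
    · obtain ⟨k, hk⟩ := h.dvd
      have hak : a = 21 - 27 * k := by omega
      exact ⟨k^2 * 27 - 45*k + 19, by rw [hak]; ring⟩
  obtain ⟨m, hm⟩ := h27
  have heval : ((1 + ρ + ρ^2)/3)^3 - (((a : ℂ)^2 + 3*a + 9)/3) * ((1 + ρ + ρ^2)/3)^2
      + (2*((a : ℂ)^2 + 3*a + 9)/9) * ((1 + ρ + ρ^2)/3)
      - ((a : ℂ)^2 + 3*a + 9)/27 = 0 := by
    linear_combination ((ρ^3 + ((a:ℂ)+3)*ρ^2 + (a:ℂ)*ρ - 1)/27) * hρ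
  refine ⟨⟨9*m, by rw [hm]; ring⟩, ⟨6*m, by rw [hm]; ring⟩, ⟨m, hm⟩, heval, ?_⟩
  refine ⟨Polynomial.X^3 + Polynomial.C (-(9*m)) * Polynomial.X^2
    + Polynomial.C (6*m) * Polynomial.X + Polynomial.C (-m), ?_, ?_⟩
  · monicity!
  · rw [← Polynomial.aeval_def]
    simp only [map_add, map_mul, map_pow, map_neg, map_ofNat, map_intCast, Polynomial.aeval_X, Polynomial.aeval_C,
      algebraMap_int_eq, eq_intCast]
    have hmc : ((a:ℂ)^2 + 3*a + 9) = 27 * (m : ℂ) := by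
      have := congrArg (Int.cast : ℤ → ℂ) hm
      push_cast at this
      linear_combination this
    linear_combination heval + (((1 + ρ + ρ^2)/3)^2/3 - 2*((1 + ρ + ρ^2)/3)/9 + 1/27)*hmc
end

section
/- Let K = ℚ(ρ) with ρ a root of the irreducible polynomial x^3 - a x^2 - (a+3)x - 1, and suppose p^2 divides a^2 + 3a + 9 for a prime p > 3. Then there exist integers k, l with 1 ≤ k, l ≤ p-1 such that (k + lρ + ρ^2)/p is an algebraic integer. -/
open Polynomial in
theorem exists_kl (a : ℤ) (p : ℕ) (hp : p.Prime) (hp3 : 3 < p)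
    (hdvd : ((p : ℤ)^2) ∣ a^2 + 3*a + 9) (ρ : ℂ)
    (hirr : Irreducible (X^3 - C (a : ℚ) * X^2 - C ((a : ℚ) + 3) * X - 1))
    (hρ : ρ^3 - a*ρ^2 - (a+3)*ρ - 1 = 0) :
    ∃ k l : ℤ, 1 ≤ k ∧ k ≤ (p : ℤ) - 1 ∧ 1 ≤ l ∧ l ≤ (p : ℤ) - 1 ∧
      IsIntegral ℤ (((k : ℂ) + l*ρ + ρ^2) / p) := by
  have hpz : Prime (p : ℤ) := Nat.prime_iff_prime_int.mp hp
  have hppos : (0:ℤ) < p := by exact_mod_cast hp.pos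
  have hpc : (p:ℂ) ≠ 0 := by exact_mod_cast (Nat.cast_ne_zero (R := ℂ)).mpr hp.ne_zero
  -- coprimality
  have hcop3 : IsCoprime (3:ℤ) (p:ℤ) := by
    rw [Int.isCoprime_iff_gcd_eq_one]
    exact_mod_cast (Nat.coprime_primes (by norm_num) hp).mpr (by omega)
  obtain ⟨c1, c2, hc⟩ := hcop3
  set r : ℤ := a * c1 with hr
  set m : ℤ := -(a * c2) with hm
  have h3r : 3 * r = a + (p:ℤ) * m := by rw [hr, hm]; linear_combination a * hc
  obtain ⟨d, hd⟩ := hdvd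
  -- p^2 divides f(r)
  have h27 : 27*(r^3 - a*r^2 - (a+3)*r - 1)
      = (p:ℤ)^2 * (-(2*a+3+3*((p:ℤ)*m))*d + (p:ℤ)*m^3) := by
    linear_combination (9*r^2 + 3*r*((p:ℤ)*m) + ((p:ℤ)*m)^2 - 6*a*r - a*((p:ℤ)*m)
      - 2*a^2 - 9*a - 27) * h3r + (-(2*a+3+3*((p:ℤ)*m))) * hd
  have hcop27 : IsCoprime ((p:ℤ)^2) (27:ℤ) := by
    have h := ((Int.isCoprime_iff_gcd_eq_one.mpr
      (by exact_mod_cast (Nat.coprime_primes (by norm_num) hp).mpr (by omega) : Int.gcd 3 p = 1)).symm.pow (m := 2) (n := 3))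
    norm_num at h
    exact h
  have hfr : ((p:ℤ)^2) ∣ (r^3 - a*r^2 - (a+3)*r - 1) := by
    refine hcop27.dvd_of_dvd_mul_right ?_
    exact ⟨(-(2*a+3+3*((p:ℤ)*m))*d + (p:ℤ)*m^3), by linarith [h27]⟩
  obtain ⟨t, ht⟩ := hfr
  -- p^2 divides f'(r)
  have h9 : 9*(3*r^2 - 2*a*r - (a+3)) = (p:ℤ)^2 * (3*m^2 - 3*d) := by
    linear_combination (3*(3*r - a + (p:ℤ)*m)) * h3r + (-3) * hd
  have hcop9 : IsCoprime ((p:ℤ)^2) (9:ℤ) := by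
    have h := ((Int.isCoprime_iff_gcd_eq_one.mpr
      (by exact_mod_cast (Nat.coprime_primes (by norm_num) hp).mpr (by omega) : Int.gcd 3 p = 1)).symm.pow (m := 2) (n := 2))
    norm_num at h
    exact h
  have hfpr : ((p:ℤ)^2) ∣ (3*r^2 - 2*a*r - (a+3)) := by
    refine hcop9.dvd_of_dvd_mul_right ?_
    exact ⟨(3*m^2 - 3*d), by linarith [h9]⟩
  obtain ⟨g, hg⟩ := hfpr
  -- the integral coefficients
  set A1 : ℤ := (p:ℤ)*(m^2 - 2*g) with hA1
  set A2 : ℤ := (p:ℤ)^2*g^2 - 2*(p:ℤ)*m*t with hA2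
  set A3 : ℤ := (p:ℤ)*t^2 with hA3
  have hT : a^2 + 2*a + 6 - 2*r*a + 3*r^2 = (p:ℤ) * A1 := by
    rw [hA1]
    linear_combination (3*r - a + (p:ℤ)*m) * h3r + (-2) * hg
  have hS : (3*r^2 - 2*a*r - (a+3))^2 - 2*(3*r - a)*(r^3 - a*r^2 - (a+3)*r - 1)
      = (p:ℤ)^2 * A2 := by
    rw [hA2]
    linear_combination (3*r^2 - 2*a*r - (a+3) + (p:ℤ)^2*g) * hg
      + (-2*(3*r - a)) * ht + (-2*(p:ℤ)^2*t) * h3r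
  have hN : (r^3 - a*r^2 - (a+3)*r - 1)^2 = (p:ℤ)^3 * A3 := by
    rw [hA3]
    linear_combination (r^3 - a*r^2 - (a+3)*r - 1 + (p:ℤ)^2*t) * ht
  -- the key complex identity: char poly of (ρ - r)^2
  have hE : (ρ - (r:ℂ))^6 - ((a:ℂ)^2 + 2*a + 6 - 2*r*a + 3*r^2)*(ρ - r)^4
      + ((3*(r:ℂ)^2 - 2*a*r - (a+3))^2 - 2*(3*r - a)*((r:ℂ)^3 - a*r^2 - (a+3)*r - 1))*(ρ - r)^2
      - ((r:ℂ)^3 - a*r^2 - (a+3)*r - 1)^2 = 0 := by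
    linear_combination (ρ^3 + ((a:ℂ) - 6*r)*ρ^2 + (12*(r:ℂ)^2 - 3 - a - 4*a*r)*ρ
      + (1 + 6*(r:ℂ) - 8*r^3 + 2*a*r + 4*a*r^2)) * hρ
  -- γ = (ρ - r)^2 / p is integral
  have hγ : ((ρ - (r:ℂ))^2/p)^3 - (A1:ℂ)*((ρ - r)^2/p)^2 + (A2:ℂ)*((ρ - r)^2/p) - (A3:ℂ) = 0 := by
    have hT' : ((a:ℂ)^2 + 2*a + 6 - 2*r*a + 3*r^2) = (p:ℂ) * A1 := by exact_mod_cast congrArg (Int.cast : ℤ → ℂ) hT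
    have hS' : ((3*(r:ℂ)^2 - 2*a*r - (a+3))^2 - 2*(3*r - a)*((r:ℂ)^3 - a*r^2 - (a+3)*r - 1)) = (p:ℂ)^2 * A2 := by
      exact_mod_cast congrArg (Int.cast : ℤ → ℂ) hS
    have hN' : ((r:ℂ)^3 - a*r^2 - (a+3)*r - 1)^2 = (p:ℂ)^3 * A3 := by
      exact_mod_cast congrArg (Int.cast : ℤ → ℂ) hN
    rw [hT', hS', hN'] at hE
    have hrw : ((ρ - (r:ℂ))^2/p)^3 - (A1:ℂ)*((ρ - r)^2/p)^2 + (A2:ℂ)*((ρ - r)^2/p) - (A3:ℂ)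
        = ((ρ - (r:ℂ))^6 - (p:ℂ)*A1*(ρ - r)^4 + (p:ℂ)^2*A2*(ρ - r)^2 - (p:ℂ)^3*A3)/(p:ℂ)^3 := by
      field_simp
    rw [hrw, hE, zero_div]
  have hγint : IsIntegral ℤ ((ρ - (r:ℂ))^2/p) := by
    refine ⟨X^3 - C A1 * X^2 + C A2 * X - C A3, ?_, ?_⟩
    · monicity!
    · simp only [eval₂_sub, eval₂_add, eval₂_mul, eval₂_pow, eval₂_X, eval₂_C, eval₂_one]
      simp only [eq_intCast]
      linear_combination hγ
  have hρint : IsIntegral ℤ ρ := by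
    refine ⟨X^3 - C a * X^2 - C (a+3) * X - 1, ?_, ?_⟩
    · monicity!
    · simp only [eval₂_sub, eval₂_add, eval₂_mul, eval₂_pow, eval₂_X, eval₂_C, eval₂_one]
      simp only [eq_intCast]
      push_cast
      linear_combination hρ
  -- p does not divide r
  have hpa : ¬ (p:ℤ) ∣ a := by
    intro h
    have h9' : (p:ℤ) ∣ 9 := by
      have h1 : (p:ℤ) ∣ a^2 + 3*a + 9 := dvd_trans (dvd_pow_self _ two_ne_zero) ⟨d, hd⟩
      have h2 : (p:ℤ) ∣ a^2 + 3*a := by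
        obtain ⟨e, he⟩ := h
        exact ⟨e*a + 3*e, by rw [he]; ring⟩
      simpa using dvd_sub h1 h2
    have h9n : p ∣ 3^2 := by exact_mod_cast h9'
    have h3 : p ∣ 3 := hp.dvd_of_dvd_pow h9n
    exact absurd (Nat.le_of_dvd (by norm_num) h3) (by omega)
  have hpr : ¬ (p:ℤ) ∣ r := by
    intro h
    apply hpa
    have : (p:ℤ) ∣ 3*r - (p:ℤ)*m := Dvd.dvd.sub (Dvd.dvd.mul_left h 3) ⟨m, rfl⟩
    rwa [h3r, add_sub_cancel_right] at this
  -- define k and l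
  set k : ℤ := (r^2) % (p:ℤ) with hk
  set l : ℤ := (-2*r) % (p:ℤ) with hl
  have hk0 : 0 ≤ k := Int.emod_nonneg _ (by positivity)
  have hkp : k < (p:ℤ) := Int.emod_lt_of_pos _ hppos
  have hkne : k ≠ 0 := by
    intro h
    exact (hpz.dvd_of_dvd_pow (n := 2) (Int.dvd_of_emod_eq_zero h)) |> hpr
  have hl0 : 0 ≤ l := Int.emod_nonneg _ (by positivity)
  have hlp : l < (p:ℤ) := Int.emod_lt_of_pos _ hppos
  have hlne : l ≠ 0 := by
    intro h
    have h2r : (p:ℤ) ∣ -2*r := Int.dvd_of_emod_eq_zero h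
    have h2r' : (p:ℤ) ∣ 2*r := dvd_neg.mp (by simpa [neg_mul] using h2r)
    rcases hpz.dvd_mul.mp h2r' with h1 | h1
    · have h2 : p ∣ 2 := by exact_mod_cast h1
      exact absurd (Nat.le_of_dvd (by norm_num) h2) (by omega)
    · exact hpr h1
  -- u, v
  set u : ℤ := -((-2*r) / (p:ℤ)) with hu
  set v : ℤ := -((r^2) / (p:ℤ)) with hv
  have hlu : l = -2*r + (p:ℤ)*u := by rw [hl, hu, Int.emod_def]; ring
  have hkv : k = r^2 + (p:ℤ)*v := by rw [hk, hv, Int.emod_def]; ring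
  refine ⟨k, l, by omega, by omega, by omega, by omega, ?_⟩
  have heq : ((k:ℂ) + l*ρ + ρ^2)/p = (ρ - (r:ℂ))^2/p + ((u:ℂ)*ρ + v) := by
    have hlu' : (l:ℂ) = -2*r + p*u := by exact_mod_cast congrArg (Int.cast : ℤ → ℂ) hlu
    have hkv' : (k:ℂ) = (r:ℂ)^2 + p*v := by exact_mod_cast congrArg (Int.cast : ℤ → ℂ) hkv
    rw [hlu', hkv']
    field_simp
    ring
  rw [heq]
  have hui : IsIntegral ℤ ((u:ℂ)) := by simpa using isIntegral_algebraMap (R := ℤ) (A := ℂ) (x := u)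
  have hvi : IsIntegral ℤ ((v:ℂ)) := by simpa using isIntegral_algebraMap (R := ℤ) (A := ℂ) (x := v)
  exact hγint.add ((hui.mul hρint).add hvi)
end

section
/- For infinitely many integers t, the value 27t^2 + 9t + 1 is squarefree; in particular, there are infinitely many integers a ≡ 3 (mod 27) such that (a^2 + 3a + 9)/27 is squarefree. -/
/-!
Write `f t = 27t² + 9t + 1` and look at the `N` integers `t ∈ [N, 2N)`. If `p² ∣ f t` for a
prime `p`, then `5 ≤ p ≤ 12N`, because `f t ≡ 1 (mod 6)` and `f t < 144N²`. The discriminant of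
`f` is `-27`, so for `p ≠ 3` the solutions of `p² ∣ f t` fill at most two residue classes
mod `p²`, which contain at most `2(N/p² + 1)` of our `t`. Summing over `p`, at most
`2N ∑_{n ≥ 5} n⁻² + 2π(12N) ≤ 4N/5 + 2π(12N)` of these values are not squarefree. By
Chebyshev's bound `π(x) = O(x / log x)` this is less than `N` once `N` is large.
-/

open Finset Filter
open scoped Nat.Prime

theorem Prime.sq_dvd_sub_or_sq_dvd_of_sq_dvd_quadratic {p a b c x y : ℤ} (hp : Prime p)
    (hdisc : ¬ p ∣ b ^ 2 - 4 * a * c)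
    (hx : p ^ 2 ∣ a * x ^ 2 + b * x + c) (hy : p ^ 2 ∣ a * y ^ 2 + b * y + c) :
    p ^ 2 ∣ x - y ∨ p ^ 2 ∣ a * (x + y) + b := by
  have hprod : p ^ 2 ∣ (x - y) * (a * (x + y) + b) := by
    rw [show (x - y) * (a * (x + y) + b) =
      a * x ^ 2 + b * x + c - (a * y ^ 2 + b * y + c) by ring]
    exact dvd_sub hx hy
  -- The two factors sum to `2ax + b`, and `(2ax + b)² ≡ b² - 4ac` modulo `ax² + bx + c`.
  have hnot : ¬ (p ∣ x - y ∧ p ∣ a * (x + y) + b) := by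
    rintro ⟨hxy, hsum⟩
    have hroot : p ∣ 2 * a * x + b := by
      rw [show 2 * a * x + b = a * (x + y) + b + a * (x - y) by ring]
      exact dvd_add hsum (dvd_mul_of_dvd_right hxy a)
    have hfx : p ∣ a * x ^ 2 + b * x + c := (dvd_pow_self p two_ne_zero).trans hx
    refine hdisc ?_
    rw [show b ^ 2 - 4 * a * c = (2 * a * x + b) ^ 2 - 4 * a * (a * x ^ 2 + b * x + c) by ring]
    exact dvd_sub (dvd_pow hroot two_ne_zero) (dvd_mul_of_dvd_right hfx _)
  by_cases hxy : p ∣ x - y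
  · exact .inl (hp.pow_dvd_of_dvd_mul_right 2 (fun h ↦ hnot ⟨hxy, h⟩) hprod)
  · exact .inr (hp.pow_dvd_of_dvd_mul_left 2 hxy hprod)

theorem Int.card_le_div_add_one_of_modEq {s : Finset ℤ} {T : ℤ} {N M : ℕ} (hM : 0 < M)
    (hs : s ⊆ Ico T (T + N)) (hmod : ∀ x ∈ s, ∀ y ∈ s, x ≡ y [ZMOD M]) :
    #s ≤ N / M + 1 := by
  have hM' : (0 : ℤ) < M := by exact_mod_cast hM
  have hq (x) (hx : x ∈ s) : 0 ≤ (x - T) / M ∧ (x - T) / M ≤ (N / M : ℕ) := by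
    obtain ⟨hTx, hxN⟩ := mem_Ico.1 (hs hx)
    rw [Int.natCast_div]
    exact ⟨Int.ediv_nonneg (by omega) hM'.le, Int.ediv_le_ediv hM' (by omega)⟩
  -- an element of `s` is determined by its quotient, since all share the remainder mod `M`
  rw [← card_range (N / M + 1)]
  refine card_le_card_of_injOn (fun x ↦ ((x - T) / M).toNat) (fun x hx ↦ ?_)
    fun x hx y hy hxy ↦ ?_
  · simp only [coe_range, Set.mem_Iio]
    have := hq x hx
    omega
  · have hxy : (x - T) / M = (y - T) / M := by
      simp only at hxy
      have := hq x hx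
      have := hq y hy
      omega
    have hr : (x - T) % M = (y - T) % M := (hmod x hx y hy).sub_right T
    linear_combination (Int.mul_ediv_add_emod (y - T) M) - (Int.mul_ediv_add_emod (x - T) M)
      + M * hxy + hr

theorem Nat.Prime.card_filter_sq_dvd_quadratic_le {p : ℕ} (hp : p.Prime) {a b c : ℤ}
    (ha : ¬ (p : ℤ) ∣ a) (hdisc : ¬ (p : ℤ) ∣ b ^ 2 - 4 * a * c) (T : ℤ) (N : ℕ) :
    #{t ∈ Ico T (T + N) | (p : ℤ) ^ 2 ∣ a * t ^ 2 + b * t + c} ≤ 2 * (N / p ^ 2 + 1) := by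
  set S := {t ∈ Ico T (T + N) | (p : ℤ) ^ 2 ∣ a * t ^ 2 + b * t + c}
  have hpZ : _root_.Prime (p : ℤ) := Nat.prime_iff_prime_int.mp hp
  obtain hS | ⟨t₀, ht₀⟩ := S.eq_empty_or_nonempty
  · simp [hS]
  have hclass (P : ℤ → Prop) [DecidablePred P]
      (hP : ∀ x y, P x → P y → x ≡ y [ZMOD (p ^ 2 : ℕ)]) : #(S.filter P) ≤ N / p ^ 2 + 1 :=
    Int.card_le_div_add_one_of_modEq (pow_pos hp.pos 2)
      ((filter_subset _ _).trans (filter_subset _ _))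
      fun x hx y hy ↦ hP x y (mem_filter.1 hx).2 (mem_filter.1 hy).2
  have hS : S ⊆ (S.filter fun t ↦ (p : ℤ) ^ 2 ∣ t - t₀) ∪
      (S.filter fun t ↦ (p : ℤ) ^ 2 ∣ a * (t + t₀) + b) := fun t ht ↦ by
    simpa [mem_union, mem_filter, ht] using
      hpZ.sq_dvd_sub_or_sq_dvd_of_sq_dvd_quadratic hdisc (mem_filter.1 ht).2 (mem_filter.1 ht₀).2
  calc #S ≤ _ := card_le_card hS
    _ ≤ _ := card_union_le _ _
    _ ≤ 2 * (N / p ^ 2 + 1) := by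
      rw [two_mul]
      gcongr
      · refine hclass _ fun x y hx hy ↦ ?_
        push_cast
        exact (Int.modEq_iff_dvd.2 hx).symm.trans (Int.modEq_iff_dvd.2 hy)
      · refine hclass _ fun x y hx hy ↦ Int.modEq_iff_dvd.2 ?_
        beta_reduce at hx hy
        push_cast
        refine hpZ.pow_dvd_of_dvd_mul_left 2 ha ?_
        rw [show a * (y - x) = a * (y + t₀) + b - (a * (x + t₀) + b) by ring]
        exact Int.dvd_sub hy hx

theorem Nat.Prime.not_dvd_twentySeven {p : ℕ} (hp : p.Prime) (hp3 : p ≠ 3) : ¬ (p : ℤ) ∣ 27 :=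
  fun h ↦ hp3 <| (Nat.prime_dvd_prime_iff_eq hp Nat.prime_three).1 <|
    hp.dvd_of_dvd_pow (n := 3) (by exact_mod_cast h)

theorem Nat.eventually_primeCounting_le_mul {ε : ℝ} (hε : 0 < ε) :
    ∀ᶠ n : ℕ in atTop, (π n : ℝ) ≤ ε * n := by
  have hlog : Tendsto (fun n : ℕ ↦ Real.log n) atTop atTop :=
    Real.tendsto_log_atTop.comp tendsto_natCast_atTop_atTop
  filter_upwards [tendsto_natCast_atTop_atTop.eventually
      (Chebyshev.eventually_primeCounting_le one_pos),
    hlog.eventually_ge_atTop ((Real.log 4 + 1) / ε)] with n hπ hlogn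
  rw [Nat.floor_natCast] at hπ
  have hlogpos : 0 < Real.log n := lt_of_lt_of_le (by positivity) hlogn
  rw [div_le_iff₀ hε] at hlogn
  calc (π n : ℝ) ≤ (Real.log 4 + 1) * n / Real.log n := hπ
    _ ≤ ε * n := by
      rw [div_le_iff₀ hlogpos]
      nlinarith [(Nat.cast_nonneg n : (0 : ℝ) ≤ n)]

theorem six_dvd_quadratic_sub_one (t : ℤ) : 6 ∣ 27 * t ^ 2 + 9 * t + 1 - 1 := by
  obtain ⟨k, hk⟩ := Int.even_mul_succ_self t
  exact ⟨3 * k + 3 * t ^ 2, by linear_combination 9 * hk⟩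

theorem five_le_of_prime_dvd_quadratic {p : ℕ} (hp : p.Prime) {t : ℤ}
    (h : (p : ℤ) ∣ 27 * t ^ 2 + 9 * t + 1) : 5 ≤ p := by
  have h6 : ¬ (p : ℤ) ∣ 6 := fun h6 ↦ hp.not_dvd_one <| Int.natCast_dvd_natCast.1 <| by
    simpa using Int.dvd_sub h (h6.trans (six_dvd_quadratic_sub_one t))
  by_contra! hp5
  interval_cases p <;> revert hp h6 <;> decide

theorem exists_prime_sq_dvd_quadratic_of_not_squarefree {t : ℤ}
    (h : ¬ Squarefree (27 * t ^ 2 + 9 * t + 1)) :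
    ∃ p : ℕ, p.Prime ∧ 5 ≤ p ∧ (p : ℤ) ^ 2 ∣ 27 * t ^ 2 + 9 * t + 1 := by
  rw [← Int.squarefree_natAbs, Nat.squarefree_iff_prime_squarefree] at h
  push Not at h
  obtain ⟨p, hp, hdvd⟩ := h
  have hdvd : (p : ℤ) ^ 2 ∣ 27 * t ^ 2 + 9 * t + 1 := by
    rw [sq, ← Nat.cast_mul]; exact Int.natCast_dvd.2 hdvd
  exact ⟨p, hp, five_le_of_prime_dvd_quadratic hp ((dvd_pow_self _ two_ne_zero).trans hdvd), hdvd⟩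

theorem card_filter_sq_dvd_quadratic_le_real {p : ℕ} (hp : p.Prime) (hp5 : 5 ≤ p) (N : ℕ) :
    (#{t ∈ Ico (N : ℤ) (N + N) | (p : ℤ) ^ 2 ∣ 27 * t ^ 2 + 9 * t + 1} : ℝ) ≤
      2 * N * (1 / (p : ℝ) ^ 2) + 2 := by
  have h27 := hp.not_dvd_twentySeven (by omega)
  have hcard := hp.card_filter_sq_dvd_quadratic_le h27
    (by norm_num [Int.dvd_neg, h27] : ¬ (p : ℤ) ∣ 9 ^ 2 - 4 * 27 * 1) N N
  calc (#{t ∈ Ico (N : ℤ) (N + N) | (p : ℤ) ^ 2 ∣ 27 * t ^ 2 + 9 * t + 1} : ℝ)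
      ≤ 2 * ((N / p ^ 2 : ℕ) + 1) := by exact_mod_cast hcard
    _ ≤ 2 * (N / (p : ℝ) ^ 2 + 1) := by gcongr; exact_mod_cast Nat.cast_div_le
    _ = 2 * N * (1 / (p : ℝ) ^ 2) + 2 := by ring

theorem le_of_sq_dvd_quadratic_of_mem_Ico {p N : ℕ} {t : ℤ} (ht : t ∈ Ico (N : ℤ) (N + N))
    (hdvd : (p : ℤ) ^ 2 ∣ 27 * t ^ 2 + 9 * t + 1) : p ≤ 12 * N := by
  obtain ⟨hNt, htN⟩ := mem_Ico.1 ht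
  have hN : (0 : ℤ) ≤ N := by positivity
  have hpos : 0 < 27 * t ^ 2 + 9 * t + 1 := by nlinarith
  have hlt : (p : ℤ) ^ 2 < (12 * N) ^ 2 := by nlinarith [Int.le_of_dvd hpos hdvd]
  have := lt_of_pow_lt_pow_left₀ 2 (by positivity) hlt
  omega

theorem exists_squarefree_quadratic_mem_Ico {N : ℕ} (hπ : (π (12 * N) : ℝ) < N / 10) :
    ∃ t ∈ Ico (N : ℤ) (N + N), Squarefree (27 * t ^ 2 + 9 * t + 1) := by
  by_contra! hbad
  set B : ℕ → Finset ℤ := fun p ↦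
    {t ∈ Ico (N : ℤ) (N + N) | (p : ℤ) ^ 2 ∣ 27 * t ^ 2 + 9 * t + 1}
  set P := {p ∈ Nat.primesLE (12 * N) | 5 ≤ p}
  have hcover : Ico (N : ℤ) (N + N) ⊆ P.biUnion B := fun t ht ↦ by
    obtain ⟨p, hp, hp5, hdvd⟩ := exists_prime_sq_dvd_quadratic_of_not_squarefree (hbad t ht)
    simp only [P, B, mem_biUnion, mem_filter, Nat.mem_primesLE]
    exact ⟨p, ⟨⟨le_of_sq_dvd_quadratic_of_mem_Ico ht hdvd, hp⟩, hp5⟩, ht, hdvd⟩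
  have hsum : ∑ p ∈ P, 1 / (p : ℝ) ^ 2 ≤ 2 / 5 := calc
    _ ≤ ∑ i ∈ Ioo 4 (12 * N + 1), ((i : ℝ) ^ 2)⁻¹ := by
      simp only [one_div]
      refine sum_le_sum_of_subset_of_nonneg (fun p hp ↦ ?_) fun _ _ _ ↦ by positivity
      simp only [P, mem_filter, Nat.mem_primesLE] at hp
      exact mem_Ioo.2 ⟨hp.2, by omega⟩
    _ ≤ 2 / ((4 : ℕ) + 1) := sum_Ioo_inv_sq_le _ _
    _ = 2 / 5 := by norm_num
  have hP : (#P : ℝ) ≤ π (12 * N) := by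
    exact_mod_cast (card_filter_le _ _).trans (Nat.primesLE_card_eq_primeCounting _).le
  have : (N : ℝ) ≤ 2 * N * (2 / 5) + 2 * π (12 * N) := calc
    (N : ℝ) = #(Ico (N : ℤ) (N + N)) := by simp
    _ ≤ #(P.biUnion B) := by exact_mod_cast card_le_card hcover
    _ ≤ ∑ p ∈ P, (#(B p) : ℝ) := by exact_mod_cast card_biUnion_le
    _ ≤ ∑ p ∈ P, (2 * N * (1 / (p : ℝ) ^ 2) + 2) := sum_le_sum fun p hp ↦ by
      simp only [P, mem_filter, Nat.mem_primesLE] at hp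
      exact card_filter_sq_dvd_quadratic_le_real hp.1.2 hp.2 N
    _ = 2 * N * ∑ p ∈ P, 1 / (p : ℝ) ^ 2 + 2 * #P := by
      rw [sum_add_distrib, ← mul_sum, sum_const, nsmul_eq_mul]; ring
    _ ≤ _ := by gcongr
  linarith

theorem eventually_primeCounting_twelve_mul_lt :
    ∀ᶠ N : ℕ in atTop, (π (12 * N) : ℝ) < N / 10 := by
  filter_upwards [(tendsto_id.const_mul_atTop' (by norm_num : 0 < 12)).eventually
      (Nat.eventually_primeCounting_le_mul (by norm_num : (0 : ℝ) < 1 / 240)),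
    eventually_gt_atTop 0] with N hN hN0
  have : (0 : ℝ) < N := by exact_mod_cast hN0
  simp only [id, Nat.cast_mul, Nat.cast_ofNat] at hN
  linarith

theorem infinitely_many_squarefree :
    {t : ℤ | Squarefree (27*t^2 + 9*t + 1)}.Infinite ∧
    {a : ℤ | a ≡ 3 [ZMOD 27] ∧ Squarefree ((a^2 + 3*a + 9)/27)}.Infinite := by
  have hsf : {t : ℤ | Squarefree (27 * t ^ 2 + 9 * t + 1)}.Infinite := by
    refine Set.infinite_of_forall_exists_gt fun B ↦ ?_
    obtain ⟨N, hπ, hBN⟩ := (eventually_primeCounting_twelve_mul_lt.and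
      (eventually_gt_atTop B.toNat)).exists
    obtain ⟨t, ht, hsq⟩ := exists_squarefree_quadratic_mem_Ico hπ
    have hBN : B < N := (Int.self_le_toNat B).trans_lt (by exact_mod_cast hBN)
    exact ⟨t, hsq, hBN.trans_le (mem_Ico.1 ht).1⟩
  refine ⟨hsf, (hsf.image fun x _ y _ (h : 27 * x + 3 = 27 * y + 3) ↦ by omega).mono ?_⟩
  rintro _ ⟨t, ht, rfl⟩
  refine ⟨Int.modEq_iff_dvd.2 ⟨-t, by ring⟩, ?_⟩
  rwa [show (27 * t + 3) ^ 2 + 3 * (27 * t + 3) + 9 = 27 * (27 * t ^ 2 + 9 * t + 1) by ring,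
    Int.mul_ediv_cancel_left _ (by norm_num)]
end

section
/- Let ρ, ρ', ρ'' be the roots of x^3 - a x^2 - (a+3)x - 1 with 27 | a^2+3a+9. Then the norm of (1 + ρ + ρ^2)/3, i.e. the product over the three roots of (1 + ρ_i + ρ_i^2)/3, equals (a^2 + 3a + 9)/27. -/
theorem norm_of_g3 (a : ℤ) (ha : a ≡ 3 [ZMOD 27] ∨ a ≡ 21 [ZMOD 27])
    (ρ₁ ρ₂ ρ₃ : ℂ)
    (hfact : ∀ x : ℂ, x^3 - a*x^2 - (a+3)*x - 1 = (x - ρ₁) * (x - ρ₂) * (x - ρ₃)) :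
    ((1 + ρ₁ + ρ₁^2)/3) * ((1 + ρ₂ + ρ₂^2)/3) * ((1 + ρ₃ + ρ₃^2)/3)
      = ((a : ℂ)^2 + 3*a + 9)/27 := by
  have h0 := hfact 0
  have h1 := hfact 1
  have hm1 := hfact (-1)
  have he3 : ρ₁*ρ₂*ρ₃ = 1 := by linear_combination h0
  have he1 : ρ₁+ρ₂+ρ₃ = a := by linear_combination (1/2 : ℂ) * h1 + (1/2 : ℂ) * hm1 - h0
  have he2 : ρ₁*ρ₂+ρ₁*ρ₃+ρ₂*ρ₃ = -(a+3) := by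
    linear_combination (-1/2 : ℂ) * h1 + (1/2 : ℂ) * hm1
  linear_combination ((ρ₁+ρ₂+ρ₃ - 3)/27) * he1
    + ((ρ₁+ρ₂+ρ₃ + ρ₁*ρ₂+ρ₁*ρ₃+ρ₂*ρ₃ - a - 3)/27) * he2
    + ((ρ₁*ρ₂*ρ₃ - 1 - (ρ₁+ρ₂+ρ₃) + ρ₁*ρ₂+ρ₁*ρ₃+ρ₂*ρ₃)/27) * he3
end

section
/- Let ρ, ρ', ρ'' be the roots of x^3 - a x^2 - (a+3)x - 1, with 3 | a. For 0 ≤ r, the norm of 1 - rρ + ρ^2 - 2·(1+ρ+ρ^2)/3 (product over the three conjugates) equals -r^3 - 3r^2 + ((a^2+3a-18)/9)·r + (4a^2+12a+9)/27. -/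
theorem norm_of_line_element (a : ℤ) (h3 : (3 : ℤ) ∣ a)
    (h27 : (27 : ℤ) ∣ a^2 + 3*a + 9) (r : ℤ) (hr : 0 ≤ r)
    (ρ₁ ρ₂ ρ₃ : ℂ)
    (hfact : ∀ x : ℂ, x^3 - a*x^2 - (a+3)*x - 1 = (x - ρ₁) * (x - ρ₂) * (x - ρ₃)) :
    (1 - r*ρ₁ + ρ₁^2 - 2*(1 + ρ₁ + ρ₁^2)/3) *
    (1 - r*ρ₂ + ρ₂^2 - 2*(1 + ρ₂ + ρ₂^2)/3) *
    (1 - r*ρ₃ + ρ₃^2 - 2*(1 + ρ₃ + ρ₃^2)/3)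
      = -(r : ℂ)^3 - 3*r^2 + (((a : ℂ)^2 + 3*a - 18)/9)*r
        + (4*(a : ℂ)^2 + 12*a + 9)/27 := by
  have hr' : (0:ℝ) ≤ (r:ℝ) := by exact_mod_cast hr
  have hnn : (0:ℝ) ≤ (3*(r:ℝ)+2)^2 - 4 := by nlinarith
  set s : ℝ := Real.sqrt ((3*(r:ℝ)+2)^2 - 4) with hs_def
  have hs : s^2 = (3*(r:ℝ)+2)^2 - 4 := Real.sq_sqrt hnn
  set z : ℂ := (((((3*(r:ℝ)+2)+s)/2 : ℝ)) : ℂ) with hz_def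
  set w : ℂ := (((((3*(r:ℝ)+2)-s)/2 : ℝ)) : ℂ) with hw_def
  have hz : z + w = 3*(r:ℂ) + 2 := by
    rw [hz_def, hw_def]; push_cast; ring
  have hw : z * w = 1 := by
    rw [hz_def, hw_def]
    have : (((3*(r:ℝ)+2)+s)/2) * (((3*(r:ℝ)+2)-s)/2) = 1 := by nlinarith [hs]
    rw [← Complex.ofReal_mul, this, Complex.ofReal_one]
  have key : ∀ ρ : ℂ, (1 - r*ρ + ρ^2 - 2*(1 + ρ + ρ^2)/3) = (ρ - z)*(ρ - w)/3 := by
    intro ρ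
    linear_combination (ρ/3)*hz - (1/3)*hw
  rw [key ρ₁, key ρ₂, key ρ₃]
  have h1 := hfact z
  have h2 := hfact w
  linear_combination (-(w - ρ₁)*(w - ρ₂)*(w - ρ₃)/27) * h1
    + (-(z^3 - (a:ℂ)*z^2 - ((a:ℂ)+3)*z - 1)/27) * h2
    + (((1)*z^2*w^3 + (-1)*z^2*w^2*(a:ℂ) + (-1)*z^2*w*(a:ℂ) + (-3)*z^2*w + (-1)*z^2 + (-1)*z*w^4 + (3)*z*w^3*(r:ℂ) + (2)*z*w^3 + (1)*z*w^2*(a:ℂ)^2 + (-3)*z*w^2*(a:ℂ)*(r:ℂ) + (-1)*z*w^2*(a:ℂ) + (3)*z*w^2 + (1)*z*w*(a:ℂ)^2 + (-3)*z*w*(a:ℂ)*(r:ℂ) + (1)*z*w*(a:ℂ) + (-9)*z*w*(r:ℂ) + (-5)*z*w + (1)*z*(a:ℂ) + (-3)*z*(r:ℂ) + (-2)*z + (1)*w^3 + (-3)*w^2*(r:ℂ) + (-3)*w^2 + (-1)*w*(a:ℂ)^2 + (3)*w*(a:ℂ)*(r:ℂ) + (1)*w*(a:ℂ) + (-3)*w*(r:ℂ)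 + (-9)*w + (3)*(a:ℂ)*(r:ℂ) + (3)*(a:ℂ) + (-9)*(r:ℂ)^2 + (-12)*(r:ℂ) + (-1))/27) * hz
    + (((1)*w^4 + (-6)*w^3*(r:ℂ) + (-4)*w^3 + (-1)*w^2*(a:ℂ)^2 + (3)*w^2*(a:ℂ)*(r:ℂ) + (9)*w^2*(r:ℂ)^2 + (12)*w^2*(r:ℂ) + (-3)*w^2 + (3)*w*(a:ℂ)^2*(r:ℂ) + (2)*w*(a:ℂ)^2 + (-9)*w*(a:ℂ)*(r:ℂ)^2 + (-6)*w*(a:ℂ)*(r:ℂ) + (21)*w*(r:ℂ) + (14)*w + (3)*(a:ℂ)^2*(r:ℂ) + (4)*(a:ℂ)^2 + (-9)*(a:ℂ)*(r:ℂ)^2 + (-6)*(a:ℂ)*(r:ℂ) + (6)*(a:ℂ) + (-27)*(r:ℂ)^2 + (-27)*(r:ℂ) + (10))/27) * hw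
end
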